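/- arXiv:1601.05059 — 2 statements merged into one kernel-verified Lean document; each statement's English description precedes it below -/
import Mathlib

section
/- For integers k ≥ 1 and T ≥ 3, the negative continued fraction [2, ..., 2, T, 2] with (k-1) twos, then T, then 2, equals -(k(2T-3) + 2) / ((k-1)(2T-3) + 2). -/
/-- Negative continued fraction: `ncf [a_0, …, a_k] = -a_0 - 1/(ncf [a_1, …, a_k])`. -/
def ncf : List ℤ → ℚ
  | [] => 0
  | [a] => -(a : ℚ)
  | a :: b :: l => -(a : ℚ) - 1 / ncf (b :: l)

/-!
Prepending an entry `2` acts on values as the Möbius map `x ↦ -2 - 1/x`, which sends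
`-(a + d)/a` to `-(a + 2d)/(a + d)`. Hence after a block of twos the value is a quotient of
consecutive terms of an arithmetic progression, and `ncf [T, 2] = -(2 + (2T - 3))/2` starts the
progression `2, 2 + (2T - 3), 2 + 2(2T - 3), …`.
-/

lemma ncf_cons (a : ℤ) {l : List ℤ} (hl : l ≠ []) :
    ncf (a :: l) = -(a : ℚ) - 1 / ncf l := by
  cases l with
  | nil => exact absurd rfl hl
  | cons b t => rfl

lemma ncf_replicate_two_append {l : List ℤ} (hl : l ≠ []) {a d : ℚ} (ha : 0 < a) (hd : 0 ≤ d)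
    (h : ncf l = -(a + d) / a) (j : ℕ) :
    ncf (List.replicate j 2 ++ l) = -(a + (j + 1) * d) / (a + j * d) := by
  induction j with
  | zero => simpa using h
  | succ j ih =>
    have hj : 0 < a + j * d := by positivity
    have hj' : 0 < a + (j + 1) * d := by positivity
    rw [List.replicate_succ, List.cons_append, ncf_cons 2 (by simp [hl]), ih]
    push_cast
    field_simp
    ring

lemma ncf_pair_two (T : ℤ) : ncf [T, 2] = -(2 + (2 * (T : ℚ) - 3)) / 2 := by
  rw [ncf_cons T (List.cons_ne_nil 2 [])]
  simp only [ncf]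
  ring

theorem ncf_twos_T_two (k : ℕ) (hk : 1 ≤ k) (T : ℤ) (hT : 3 ≤ T) :
    ncf (List.replicate (k - 1) 2 ++ [T, 2])
      = -((k : ℚ) * (2 * (T : ℚ) - 3) + 2) / (((k : ℚ) - 1) * (2 * (T : ℚ) - 3) + 2) := by
  obtain ⟨j, rfl⟩ : ∃ j, k = j + 1 := ⟨k - 1, by omega⟩
  have hd : (0 : ℚ) ≤ 2 * T - 3 := by
    have : (3 : ℚ) ≤ T := by exact_mod_cast hT
    linarith
  rw [Nat.add_sub_cancel,
    ncf_replicate_two_append (List.cons_ne_nil _ _) two_pos hd (ncf_pair_two T) j]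
  push_cast
  ring
end

section
/- For integers k ≥ 0 and l ≥ 0, the negative continued fraction [k+2, 2, ..., 2] with l twos following k+2 equals -((k+1)(l+1) + 1)/(l+1); equivalently its reciprocal is -(l+1)/((k+1)(l+1)+1). -/
lemma ncf_replicate_twos : ∀ l : ℕ, ncf (List.replicate (l + 1) 2) = -((l : ℚ) + 2) / ((l : ℚ) + 1)
  | 0 => by norm_num [ncf]
  | l + 1 => by
    have ih := ncf_replicate_twos l
    rw [show List.replicate (l + 1) (2 : ℤ) = 2 :: List.replicate l 2 from
      List.replicate_succ ..] at ih
    rw [show List.replicate (l + 1 + 1) (2 : ℤ) = 2 :: 2 :: List.replicate l 2 by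
      simp [List.replicate_succ]]
    rw [show ncf (2 :: 2 :: List.replicate l 2) = -(2 : ℚ) - 1 / ncf (2 :: List.replicate l 2) by
      simp [ncf], ih, one_div, inv_div, div_neg, sub_neg_eq_add]
    have h2 : ((l : ℚ) + 2) ≠ 0 := by positivity
    push_cast
    field_simp
    ring

theorem ncf_kplus2_then_twos (k l : ℕ) :
    ncf (((k : ℤ) + 2) :: List.replicate l 2)
        = -(((k : ℚ) + 1) * ((l : ℚ) + 1) + 1) / ((l : ℚ) + 1) ∧
      (ncf (((k : ℤ) + 2) :: List.replicate l 2))⁻¹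
        = -((l : ℚ) + 1) / (((k : ℚ) + 1) * ((l : ℚ) + 1) + 1) := by
  have h : ncf (((k : ℤ) + 2) :: List.replicate l 2)
      = -(((k : ℚ) + 1) * ((l : ℚ) + 1) + 1) / ((l : ℚ) + 1) := by
    cases l with
    | zero => simp [ncf]; push_cast; ring
    | succ l =>
      have ih := ncf_replicate_twos l
      rw [show List.replicate (l + 1) (2 : ℤ) = 2 :: List.replicate l 2 from
        List.replicate_succ ..] at ih
      rw [show List.replicate (l + 1) (2 : ℤ) = 2 :: List.replicate l 2 from
        List.replicate_succ ..]
      rw [show ncf (((k : ℤ) + 2) :: 2 :: List.replicate l 2)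
          = -(((k : ℤ) + 2) : ℚ) - 1 / ncf (2 :: List.replicate l 2) by simp [ncf],
        ih, one_div, inv_div, div_neg, sub_neg_eq_add]
      have h2 : ((l : ℚ) + 2) ≠ 0 := by positivity
      push_cast
      field_simp
      ring
  refine ⟨h, ?_⟩
  rw [h, inv_div, div_neg, neg_div]
end
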